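/- arXiv:1901.07928 — 3 statements merged into one kernel-verified Lean document; each statement's English description precedes it below -/
import Mathlib

section
/- Let z > 0 and k ≥ 1. Suppose a sequence of real numbers d_0^+, d_1^-, d_1^+, ..., d_k^-, d_k^+ satisfies d_0^+ = 0, d_{i-1}^+ ≤ d_i^- ≤ d_i^+ for all i = 1..k, and d_i^+ ≥ d_i^- + (z - d_i^-)/k for all i = 1..k. Then d_k^+ ≥ (1 - (1-1/k)^k) · z. -/
theorem stmt_0 (z : ℝ) (hz : 0 < z) (k : ℕ) (hk : 1 ≤ k)
    (dm dp : ℕ → ℝ) (h0 : dp 0 = 0)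
    (hmono : ∀ i, 1 ≤ i → i ≤ k → dp (i - 1) ≤ dm i ∧ dm i ≤ dp i)
    (hrec : ∀ i, 1 ≤ i → i ≤ k → dp i ≥ dm i + (z - dm i) / k) :
    dp k ≥ (1 - (1 - 1 / (k : ℝ)) ^ k) * z := by
  have hk0 : (0:ℝ) < k := by exact_mod_cast hk
  have hc : (0:ℝ) ≤ 1 - 1 / k := by
    rw [sub_nonneg, div_le_one hk0]; exact_mod_cast hk
  have key : ∀ i, i ≤ k → z - dp i ≤ (1 - 1 / (k:ℝ)) ^ i * z := by
    intro i
    induction i with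
    | zero => intro _; simp [h0]
    | succ n ih =>
      intro hnk
      have hn1 : 1 ≤ n + 1 := Nat.le_add_left 1 n
      have hm := hmono (n+1) hn1 hnk
      have hr := hrec (n+1) hn1 hnk
      have hstep : z - dp (n+1) ≤ (1 - 1/(k:ℝ)) * (z - dp n) := by
        have : z - dp (n+1) ≤ (1 - 1/(k:ℝ)) * (z - dm (n+1)) := by
          have e : (1 - 1/(k:ℝ)) * (z - dm (n+1)) = z - dm (n+1) - (z - dm (n+1))/k := by
            field_simp
          linarith [hr, e]
        have h2 : (1 - 1/(k:ℝ)) * (z - dm (n+1)) ≤ (1 - 1/(k:ℝ)) * (z - dp n) := by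
          apply mul_le_mul_of_nonneg_left _ hc
          have := hm.1; simp at this; linarith
        linarith
      have ihn := ih (Nat.le_of_succ_le hnk)
      calc z - dp (n+1) ≤ (1 - 1/(k:ℝ)) * (z - dp n) := hstep
        _ ≤ (1 - 1/(k:ℝ)) * ((1 - 1/(k:ℝ))^n * z) := mul_le_mul_of_nonneg_left ihn hc
        _ = (1 - 1/(k:ℝ))^(n+1) * z := by ring
  have := key k le_rfl
  nlinarith
end

section
/- Let V be a finite set, ℰ_f a finite multiset of subsets of V, S ⊆ V, and let ℰ_r ⊆ ℰ_f be the sub-multiset of hyperedges not intersecting S, with d_S = |ℰ_f| − |ℰ_r| the number of hyperedges covered by S. Then for any S* ⊆ V with |S*| = k, Cov(S*, ℰ_f) ≤ d_S + k · max_{v ∈ V} Cov({v}, ℰ_r). -/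
/-- Coverage: number of hyperedges in the multiset `ℰ` intersecting `S`. -/
def Cov {V : Type*} [DecidableEq V] (S : Finset V) (ℰ : Multiset (Finset V)) : ℕ :=
  (ℰ.filter (fun E => (S ∩ E).Nonempty)).card

lemma cov_add {V : Type*} [DecidableEq V] (S : Finset V) (A B : Multiset (Finset V)) :
    Cov S (A + B) = Cov S A + Cov S B := by
  simp [Cov, Multiset.filter_add]

lemma cov_le_card {V : Type*} [DecidableEq V] (S : Finset V) (A : Multiset (Finset V)) :
    Cov S A ≤ Multiset.card A := by
  simpa [Cov] using Multiset.card_le_card (Multiset.filter_le _ A)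

lemma cov_le_sum {V : Type*} [DecidableEq V] (T : Finset V) (ℰ : Multiset (Finset V)) :
    Cov T ℰ ≤ ∑ v ∈ T, Cov ({v} : Finset V) ℰ := by
  induction ℰ using Multiset.induction with
  | empty => simp [Cov]
  | cons a s ih =>
    have h1 : ∀ (U : Finset V), Cov U (a ::ₘ s) =
        (if (U ∩ a).Nonempty then 1 else 0) + Cov U s := by
      intro U
      simp [Cov, Multiset.filter_cons]
      split <;> simp
    rw [h1]
    simp only [h1]
    rw [Finset.sum_add_distrib]
    have h2 : (if (T ∩ a).Nonempty then 1 else 0) ≤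
        ∑ v ∈ T, (if (({v} : Finset V) ∩ a).Nonempty then 1 else 0) := by
      split
      · next h =>
        obtain ⟨v, hv⟩ := h
        simp only [Finset.mem_inter] at hv
        calc 1 = (if (({v} : Finset V) ∩ a).Nonempty then 1 else 0) := by
                  simp [Finset.singleton_inter_of_mem hv.2]
          _ ≤ _ := Finset.single_le_sum (f := fun v => if (({v} : Finset V) ∩ a).Nonempty then 1 else 0) (fun _ _ => Nat.zero_le _) hv.1
      · exact Nat.zero_le _
    exact Nat.add_le_add h2 ih

theorem stmt_6 {V : Type*} [Fintype V] [DecidableEq V]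
    (ℰf ℰr : Multiset (Finset V)) (S : Finset V)
    (hr : ℰr = ℰf.filter (fun E => ¬ (S ∩ E).Nonempty))
    (dS : ℕ) (hd : dS = Multiset.card ℰf - Multiset.card ℰr)
    (k : ℕ) (Sstar : Finset V) (hcard : Sstar.card = k) :
    Cov Sstar ℰf ≤ dS + k * Finset.univ.sup (fun v => Cov ({v} : Finset V) ℰr) := by
  classical
  set p : Finset V → Prop := fun E => (S ∩ E).Nonempty with hp
  have hsplit : ℰf.filter p + ℰr = ℰf := by
    rw [hr]; exact Multiset.filter_add_not _ _
  have hcov : Cov Sstar ℰf ≤ Multiset.card (ℰf.filter p) + Cov Sstar ℰr := by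
    calc Cov Sstar ℰf = Cov Sstar (ℰf.filter p) + Cov Sstar ℰr := by
          rw [← cov_add, hsplit]
      _ ≤ _ := Nat.add_le_add_right (cov_le_card _ _) _
  have hdS : Multiset.card (ℰf.filter p) = dS := by
    have := congrArg Multiset.card hsplit
    simp at this
    omega
  have hsum : Cov Sstar ℰr ≤ k * Finset.univ.sup (fun v => Cov ({v} : Finset V) ℰr) := by
    calc Cov Sstar ℰr ≤ ∑ v ∈ Sstar, Cov ({v} : Finset V) ℰr := cov_le_sum _ _
      _ ≤ ∑ _v ∈ Sstar, Finset.univ.sup (fun v => Cov ({v} : Finset V) ℰr) := by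
          apply Finset.sum_le_sum
          intro v _
          exact Finset.le_sup (f := fun v => Cov ({v} : Finset V) ℰr) (Finset.mem_univ v)
      _ = k * _ := by rw [Finset.sum_const, hcard]; ring
  omega
end

section
/- Let V be a finite set, ℰ a finite multiset of subsets of V, S ⊆ V a set such that every v ∈ V satisfies Cov({v}, ℰ) ≤ z/2, and suppose the optimal set S* of size k satisfies |S* \ S| ≤ 1 and Cov(S*, ℰ) ≥ z for some real z > 0. Then Cov(S, ℰ) ≥ z/2. -/
section Cov

variable {V : Type*} [DecidableEq V] (ℰ : Multiset (Finset V))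

@[simp]
lemma Cov_empty : Cov ∅ ℰ = 0 := by
  simp [Cov]

lemma Cov_mono {A B : Finset V} (h : A ⊆ B) : Cov A ℰ ≤ Cov B ℰ :=
  Multiset.card_le_card <| Multiset.monotone_filter_right _ fun _ hE =>
    hE.mono (Finset.inter_subset_inter_right h)

lemma Cov_union_le (A B : Finset V) : Cov (A ∪ B) ℰ ≤ Cov A ℰ + Cov B ℰ := by
  have hsum := congrArg Multiset.card
    (Multiset.filter_add_filter (fun E => (A ∩ E).Nonempty) (fun E => (B ∩ E).Nonempty) ℰ)
  simp only [Multiset.card_add] at hsum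
  simp only [Cov, Finset.union_inter_distrib_right, Finset.union_nonempty]
  omega

lemma Cov_le_Cov_add_Cov_sdiff (S T : Finset V) : Cov T ℰ ≤ Cov S ℰ + Cov (T \ S) ℰ :=
  calc Cov T ℰ ≤ Cov (S ∪ T \ S) ℰ := Cov_mono ℰ (by simp)
    _ ≤ Cov S ℰ + Cov (T \ S) ℰ := Cov_union_le ℰ S (T \ S)

end Cov

theorem stmt_13_general {V : Type*} [DecidableEq V]
    (ℰ : Multiset (Finset V)) (S Sstar : Finset V) (z : ℝ)
    (hdeg : ∀ v : V, (Cov ({v} : Finset V) ℰ : ℝ) ≤ z / 2)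
    (hdiff : (Sstar \ S).card ≤ 1)
    (hopt : (Cov Sstar ℰ : ℝ) ≥ z) :
    (Cov S ℰ : ℝ) ≥ z / 2 := by
  have hsplit : (Cov Sstar ℰ : ℝ) ≤ Cov S ℰ + Cov (Sstar \ S) ℰ := by
    exact_mod_cast Cov_le_Cov_add_Cov_sdiff ℰ S Sstar
  have hS : (0 : ℝ) ≤ Cov S ℰ := Nat.cast_nonneg _
  rcases Nat.le_one_iff_eq_zero_or_eq_one.1 hdiff with h0 | h1
  · rw [Finset.card_eq_zero.1 h0, Cov_empty, Nat.cast_zero] at hsplit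
    linarith
  · obtain ⟨v, hv⟩ := Finset.card_eq_one.1 h1
    rw [hv] at hsplit
    linarith [hdeg v]

theorem stmt_13 {V : Type*} [Fintype V] [DecidableEq V]
    (ℰ : Multiset (Finset V)) (S Sstar : Finset V) (k : ℕ) (z : ℝ) (hz : 0 < z)
    (hdeg : ∀ v : V, (Cov ({v} : Finset V) ℰ : ℝ) ≤ z / 2)
    (hcard : Sstar.card = k) (hdiff : (Sstar \ S).card ≤ 1)
    (hopt : (Cov Sstar ℰ : ℝ) ≥ z) :
    (Cov S ℰ : ℝ) ≥ z / 2 :=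
  stmt_13_general ℰ S Sstar z hdeg hdiff hopt
end
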